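/- arXiv:math/0601381 — 4 statements merged into one kernel-verified Lean document; each statement's English description precedes it below -/
import Mathlib

section
/- Let n₁, n₂ ∈ ℕ and let A be an invertible complex (n₁+n₂)×(n₁+n₂) matrix written in 2×2 block form A = [[A₁₁, A₁₂], [A₂₁, A₂₂]] with A₁₁ of size n₁×n₁ and A₂₂ of size n₂×n₂, and let B = A⁻¹ with the corresponding block decomposition B = [[B₁₁, B₁₂], [B₂₁, B₂₂]]. Assume that A₂₂ and B₁₁ are invertible. Then for every complex (n₁+n₂)×(n₁+n₂) matrix X with block decomposition (X_{jk}), setting Y = −B·X·B with block decomposition (Y_{jk}), one has tr(X·B) = tr(X₂₂·A₂₂⁻¹) − tr(B₁₁⁻¹·Y₁₁). -/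
open Matrix

section Aux

variable {n₁ n₂ : ℕ}

private lemma trace_blocks (M : Matrix (Fin n₁ ⊕ Fin n₂) (Fin n₁ ⊕ Fin n₂) ℂ) :
    M.trace = M.toBlocks₁₁.trace + M.toBlocks₂₂.trace := by
  simp [Matrix.trace, Matrix.diag, Fintype.sum_sum_type, Matrix.toBlocks₁₁, Matrix.toBlocks₂₂]

private lemma mul_toBlocks₁₁ (M N : Matrix (Fin n₁ ⊕ Fin n₂) (Fin n₁ ⊕ Fin n₂) ℂ) :
    (M * N).toBlocks₁₁ = M.toBlocks₁₁ * N.toBlocks₁₁ + M.toBlocks₁₂ * N.toBlocks₂₁ := by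
  conv_lhs => rw [← fromBlocks_toBlocks M, ← fromBlocks_toBlocks N, fromBlocks_multiply,
    toBlocks_fromBlocks₁₁]

private lemma mul_toBlocks₁₂ (M N : Matrix (Fin n₁ ⊕ Fin n₂) (Fin n₁ ⊕ Fin n₂) ℂ) :
    (M * N).toBlocks₁₂ = M.toBlocks₁₁ * N.toBlocks₁₂ + M.toBlocks₁₂ * N.toBlocks₂₂ := by
  conv_lhs => rw [← fromBlocks_toBlocks M, ← fromBlocks_toBlocks N, fromBlocks_multiply,
    toBlocks_fromBlocks₁₂]

private lemma mul_toBlocks₂₁ (M N : Matrix (Fin n₁ ⊕ Fin n₂) (Fin n₁ ⊕ Fin n₂) ℂ) :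
    (M * N).toBlocks₂₁ = M.toBlocks₂₁ * N.toBlocks₁₁ + M.toBlocks₂₂ * N.toBlocks₂₁ := by
  conv_lhs => rw [← fromBlocks_toBlocks M, ← fromBlocks_toBlocks N, fromBlocks_multiply,
    toBlocks_fromBlocks₂₁]

private lemma mul_toBlocks₂₂ (M N : Matrix (Fin n₁ ⊕ Fin n₂) (Fin n₁ ⊕ Fin n₂) ℂ) :
    (M * N).toBlocks₂₂ = M.toBlocks₂₁ * N.toBlocks₁₂ + M.toBlocks₂₂ * N.toBlocks₂₂ := by
  conv_lhs => rw [← fromBlocks_toBlocks M, ← fromBlocks_toBlocks N, fromBlocks_multiply,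
    toBlocks_fromBlocks₂₂]

end Aux

/-- Trace identity for block matrices: if `A` is invertible with inverse `B`,
and `A₂₂`, `B₁₁` are invertible, then for any `X`, setting `Y = -B * X * B`,
`tr (X * B) = tr (X₂₂ * A₂₂⁻¹) - tr (B₁₁⁻¹ * Y₁₁)`. -/
theorem stmt0 (n₁ n₂ : ℕ)
    (A : Matrix (Fin n₁ ⊕ Fin n₂) (Fin n₁ ⊕ Fin n₂) ℂ)
    (hA : IsUnit A)
    (B : Matrix (Fin n₁ ⊕ Fin n₂) (Fin n₁ ⊕ Fin n₂) ℂ)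
    (hB : B = A⁻¹)
    (hA22 : IsUnit (A.toBlocks₂₂))
    (hB11 : IsUnit (B.toBlocks₁₁))
    (X : Matrix (Fin n₁ ⊕ Fin n₂) (Fin n₁ ⊕ Fin n₂) ℂ)
    (Y : Matrix (Fin n₁ ⊕ Fin n₂) (Fin n₁ ⊕ Fin n₂) ℂ)
    (hY : Y = -(B * X * B)) :
    (X * B).trace
      = (X.toBlocks₂₂ * (A.toBlocks₂₂)⁻¹).trace
        - ((B.toBlocks₁₁)⁻¹ * Y.toBlocks₁₁).trace := by
  have hAdet : IsUnit A.det := (Matrix.isUnit_iff_isUnit_det A).mp hA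
  have hAB : A * B = 1 := by rw [hB]; exact Matrix.mul_nonsing_inv A hAdet
  -- block equations from A * B = 1
  have e21 : A.toBlocks₂₁ * B.toBlocks₁₁ + A.toBlocks₂₂ * B.toBlocks₂₁ = 0 := by
    have := congrArg Matrix.toBlocks₂₁ hAB
    rwa [mul_toBlocks₂₁, show (1 : Matrix (Fin n₁ ⊕ Fin n₂) (Fin n₁ ⊕ Fin n₂) ℂ).toBlocks₂₁ = 0
      by rw [← fromBlocks_one, toBlocks_fromBlocks₂₁]] at this
  have e22 : A.toBlocks₂₁ * B.toBlocks₁₂ + A.toBlocks₂₂ * B.toBlocks₂₂ = 1 := by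
    have := congrArg Matrix.toBlocks₂₂ hAB
    rwa [mul_toBlocks₂₂, show (1 : Matrix (Fin n₁ ⊕ Fin n₂) (Fin n₁ ⊕ Fin n₂) ℂ).toBlocks₂₂ = 1
      by rw [← fromBlocks_one, toBlocks_fromBlocks₂₂]] at this
  have hb11 : B.toBlocks₁₁ * B.toBlocks₁₁⁻¹ = 1 :=
    Matrix.mul_nonsing_inv _ ((Matrix.isUnit_iff_isUnit_det _).mp hB11)
  have hb11' : B.toBlocks₁₁⁻¹ * B.toBlocks₁₁ = 1 :=
    Matrix.nonsing_inv_mul _ ((Matrix.isUnit_iff_isUnit_det _).mp hB11)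
  -- Schur-type identity: A.toBlocks₂₂⁻¹ = B.toBlocks₂₂ - B.toBlocks₂₁ * B.toBlocks₁₁⁻¹ * B.toBlocks₁₂
  have key : A.toBlocks₂₂ * B.toBlocks₂₁ * B.toBlocks₁₁⁻¹ = -A.toBlocks₂₁ := by
    have h1 : A.toBlocks₂₂ * B.toBlocks₂₁ = -(A.toBlocks₂₁ * B.toBlocks₁₁) := eq_neg_of_add_eq_zero_right e21
    rw [h1, Matrix.neg_mul, Matrix.mul_assoc, hb11, Matrix.mul_one]
  have hSchur : A.toBlocks₂₂⁻¹ = B.toBlocks₂₂ - B.toBlocks₂₁ * B.toBlocks₁₁⁻¹ * B.toBlocks₁₂ := by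
    refine Matrix.inv_eq_right_inv ?_
    rw [Matrix.mul_sub, ← Matrix.mul_assoc, ← Matrix.mul_assoc, key, Matrix.neg_mul,
      sub_neg_eq_add, add_comm]
    exact e22
  -- compute Y₁₁
  have hY11 : Y.toBlocks₁₁ =
      -((B.toBlocks₁₁ * X.toBlocks₁₁ + B.toBlocks₁₂ * X.toBlocks₂₁) * B.toBlocks₁₁ + (B.toBlocks₁₁ * X.toBlocks₁₂ + B.toBlocks₁₂ * X.toBlocks₂₂) * B.toBlocks₂₁) := by
    rw [hY]
    have : (-(B * X * B)).toBlocks₁₁ = -((B * X * B).toBlocks₁₁) := rfl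
    rw [this, mul_toBlocks₁₁, mul_toBlocks₁₁, mul_toBlocks₁₂]
  rw [hY11, hSchur, trace_blocks (X * B), mul_toBlocks₁₁, mul_toBlocks₂₂]
  simp only [Matrix.mul_sub, Matrix.mul_neg, Matrix.mul_add, Matrix.add_mul,
    Matrix.trace_add, Matrix.trace_sub, Matrix.trace_neg, Matrix.mul_assoc, sub_neg_eq_add]
  have t1 : (B.toBlocks₁₁⁻¹ * (B.toBlocks₁₁ * (X.toBlocks₁₁ * B.toBlocks₁₁))).trace = (X.toBlocks₁₁ * B.toBlocks₁₁).trace := by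
    rw [← Matrix.mul_assoc, hb11', Matrix.one_mul]
  have t2 : (B.toBlocks₁₁⁻¹ * (B.toBlocks₁₁ * (X.toBlocks₁₂ * B.toBlocks₂₁))).trace = (X.toBlocks₁₂ * B.toBlocks₂₁).trace := by
    rw [← Matrix.mul_assoc, hb11', Matrix.one_mul]
  have t3 : (B.toBlocks₁₁⁻¹ * (B.toBlocks₁₂ * (X.toBlocks₂₁ * B.toBlocks₁₁))).trace = (X.toBlocks₂₁ * B.toBlocks₁₂).trace := by
    rw [Matrix.trace_mul_comm, Matrix.mul_assoc, Matrix.mul_assoc, hb11, Matrix.mul_one,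
      Matrix.trace_mul_comm]
  have t4 : (B.toBlocks₁₁⁻¹ * (B.toBlocks₁₂ * (X.toBlocks₂₂ * B.toBlocks₂₁))).trace = (X.toBlocks₂₂ * (B.toBlocks₂₁ * (B.toBlocks₁₁⁻¹ * B.toBlocks₁₂))).trace := by
    rw [← Matrix.mul_assoc, Matrix.trace_mul_comm, Matrix.mul_assoc, ← Matrix.mul_assoc B.toBlocks₂₁]
  linear_combination -t1 - t2 - t3 - t4
end

section
/- Let n, N ∈ ℕ, let P be an n×n complex matrix, R₋ an n×N complex matrix, and R₊ an N×n complex matrix. Suppose that both P and the (n+N)×(n+N) block matrix 𝒫 = [[P, R₋], [R₊, 0]] are invertible, and write 𝒫⁻¹ = [[E, E₊], [E₋, E₋₊]] in the corresponding block form, so that E₋₊ is an N×N matrix. Then det P = det 𝒫 · det E₋₊. -/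
open Matrix

/-- Determinant factorization for a finite-dimensional Grushin problem:
if `P` and the bordered matrix `𝒫 = [[P, R₋], [R₊, 0]]` are both invertible,
and `E₋₊` is the lower-right block of `𝒫⁻¹`, then `det P = det 𝒫 * det E₋₊`. -/
theorem stmt1 (n N : ℕ)
    (P : Matrix (Fin n) (Fin n) ℂ)
    (Rm : Matrix (Fin n) (Fin N) ℂ)
    (Rp : Matrix (Fin N) (Fin n) ℂ)
    (hP : IsUnit P)
    (hG : IsUnit (Matrix.fromBlocks P Rm Rp (0 : Matrix (Fin N) (Fin N) ℂ))) :
    P.det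
      = (Matrix.fromBlocks P Rm Rp (0 : Matrix (Fin N) (Fin N) ℂ)).det
        * ((Matrix.fromBlocks P Rm Rp (0 : Matrix (Fin N) (Fin N) ℂ))⁻¹.toBlocks₂₂).det := by
  cases hP.nonempty_invertible
  cases hG.nonempty_invertible
  letI : Invertible ((0 : Matrix (Fin N) (Fin N) ℂ) - Rp * ⅟P * Rm) :=
    invertibleOfFromBlocks₁₁Invertible P Rm Rp 0
  rw [← invOf_eq_nonsing_inv, invOf_fromBlocks₁₁_eq, toBlocks_fromBlocks₂₂,
    det_fromBlocks₁₁, mul_assoc, ← det_mul, mul_invOf_self, det_one, mul_one]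
end

section
/- For each integer N ≥ 1 set x(N) = ln(N!)/N and define the probability density ρ_N on ℝ by ρ_N(t) = e^{Nt}/(N−1)! for t ≤ x(N) and ρ_N(t) = 0 for t > x(N). Then there exists a constant C > 0 such that for every N ≥ 1 and every a ≤ ∑_{j=1}^N x(j), one has ∫_{−∞}^a (ρ₁ * ρ₂ * ⋯ * ρ_N)(t) dt ≤ C · N^{1/2} · exp(−(1/2)(∑_{j=1}^N x(j) − a)), where * denotes convolution of densities on ℝ. -/
open MeasureTheory

/-- `x(N) = ln(N!)/N`. -/
noncomputable def xN (N : ℕ) : ℝ := Real.log (Nat.factorial N) / N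

/-- The probability density `ρ_N(t) = e^(Nt)/(N-1)!` for `t ≤ x(N)`, `0` otherwise. -/
noncomputable def rhoD (N : ℕ) : ℝ → ℝ := fun t =>
  if t ≤ xN N then Real.exp (N * t) / (Nat.factorial (N - 1)) else 0

/-- Iterated convolution of a list of densities on `ℝ`. -/
noncomputable def convDList : List (ℝ → ℝ) → (ℝ → ℝ)
  | [] => fun _ => 0
  | [f] => f
  | f :: g :: l =>
      MeasureTheory.convolution f (convDList (g :: l)) (ContinuousLinearMap.lsmul ℝ ℝ) volume

section Aux

open Real Set

lemma convDList_cons₂ (f g : ℝ → ℝ) (l : List (ℝ → ℝ)) :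
    convDList (f :: g :: l) =
      MeasureTheory.convolution f (convDList (g :: l)) (ContinuousLinearMap.lsmul ℝ ℝ) volume :=
  rfl

lemma conv_list (g : ℝ → ℝ) (l : List (ℝ → ℝ))
    (h : ∀ f ∈ g :: l, Integrable f volume ∧ ∀ t, 0 ≤ f t) :
    Integrable (convDList (g :: l)) volume ∧ (∀ t, 0 ≤ convDList (g :: l) t) ∧
      ∫ t, convDList (g :: l) t = ((g :: l).map (fun f => ∫ t, f t)).prod := by
  induction l generalizing g with
  | nil =>
    refine ⟨(h g (by simp)).1, (h g (by simp)).2, ?_⟩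
    simp [convDList]
  | cons f l ih =>
    obtain ⟨hC1, hC2, hC3⟩ := ih f (fun p hp => h p (List.mem_cons_of_mem _ hp))
    have hg := h g (by simp)
    rw [convDList_cons₂]
    refine ⟨hg.1.integrable_convolution _ hC1, fun t => ?_, ?_⟩
    · rw [MeasureTheory.convolution_def]
      refine integral_nonneg fun s => ?_
      simp only [ContinuousLinearMap.lsmul_apply, smul_eq_mul]
      exact mul_nonneg (hg.2 s) (hC2 _)
    · rw [MeasureTheory.integral_convolution _ hg.1 hC1, hC3]
      simp [List.map_cons, List.prod_cons]

lemma weight_conv (w : ℝ → ℝ) (hw : ∀ s t, w (s + t) = w s * w t) (g : ℝ → ℝ)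
    (l : List (ℝ → ℝ)) (t : ℝ) :
    w t * convDList (g :: l) t = convDList ((g :: l).map (fun f => fun s => w s * f s)) t := by
  induction l generalizing g t with
  | nil => simp [convDList]
  | cons f l ih =>
    simp only [List.map_cons] at ih ⊢
    rw [convDList_cons₂, convDList_cons₂]
    rw [MeasureTheory.convolution_def, MeasureTheory.convolution_def, ← integral_const_mul]
    refine integral_congr_ae (Filter.Eventually.of_forall fun s => ?_)
    simp only [ContinuousLinearMap.lsmul_apply, smul_eq_mul]
    have h1 : w t = w s * w (t - s) := by
      rw [← hw s (t - s), add_sub_cancel]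
    rw [← ih f (t - s)]
    rw [h1]; ring

lemma expcut_integrable {c b : ℝ} (hc : 0 < c) :
    Integrable (fun t => if t ≤ b then Real.exp (c * t) else 0) volume := by
  have hg : Integrable (fun y => if y ≤ c * b then Real.exp y else 0) volume := by
    have := (integrable_indicator_iff (measurableSet_Iic (a := c * b))).2
      (integrableOn_exp_Iic (c * b))
    refine this.congr (Filter.Eventually.of_forall fun y => ?_)
    simp [Set.indicator, Set.mem_Iic]
  have := hg.comp_mul_left' hc.ne'
  refine this.congr (Filter.Eventually.of_forall fun t => ?_)
  simp only []
  simp only [mul_le_mul_iff_right₀ hc]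

lemma expcut_integral {c b : ℝ} (hc : 0 < c) :
    ∫ t, (if t ≤ b then Real.exp (c * t) else 0) = Real.exp (c * b) / c := by
  have hg : ∫ y, (if y ≤ c * b then Real.exp y else 0) = Real.exp (c * b) := by
    rw [show (fun y => if y ≤ c * b then Real.exp y else 0)
        = (Set.Iic (c*b)).indicator Real.exp by
      ext y; simp [Set.indicator, Set.mem_Iic]]
    rw [integral_indicator (measurableSet_Iic)]
    exact integral_exp_Iic (c*b)
  have h2 := MeasureTheory.Measure.integral_comp_mul_left
    (fun y => if y ≤ c * b then Real.exp y else 0) c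
  rw [hg] at h2
  have h3 : (fun x => if c * x ≤ c * b then Real.exp (c * x) else 0)
      = (fun t => if t ≤ b then Real.exp (c * t) else 0) := by
    ext t
    simp only [mul_le_mul_iff_right₀ hc]
  rw [h3] at h2
  rw [h2, abs_of_pos (inv_pos.2 hc), smul_eq_mul, div_eq_inv_mul]

lemma exp_mul_xN (n : ℕ) : Real.exp (((n : ℝ) + 1) * xN (n + 1)) = Nat.factorial (n + 1) := by
  have h : ((n : ℝ) + 1) * xN (n + 1) = Real.log (Nat.factorial (n + 1)) := by
    rw [xN]
    push_cast
    field_simp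
  rw [h, Real.exp_log (by exact_mod_cast Nat.factorial_pos (n + 1))]

lemma rhoD_eq (n : ℕ) : rhoD (n + 1)
    = fun t => (if t ≤ xN (n + 1) then Real.exp (((n : ℝ) + 1) * t) else 0) / Nat.factorial n := by
  ext t
  rw [rhoD]
  push_cast
  by_cases h : t ≤ xN (n+1) <;> simp [h]

lemma rhoD_integrable (n : ℕ) : Integrable (rhoD (n + 1)) volume := by
  rw [rhoD_eq]
  exact (expcut_integrable (by positivity)).div_const _

lemma rhoD_nonneg (n : ℕ) (t : ℝ) : 0 ≤ rhoD (n + 1) t := by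
  rw [rhoD]; positivity

lemma sigma_eq (n : ℕ) : (fun t => Real.exp (-(t/2)) * rhoD (n + 1) t)
    = fun t => (if t ≤ xN (n + 1) then Real.exp (((n : ℝ) + 1/2) * t) else 0) / Nat.factorial n := by
  ext t
  rw [rhoD_eq]
  by_cases h : t ≤ xN (n+1) <;> simp only [h, if_true, if_false]
  · rw [mul_div_assoc', ← Real.exp_add]; ring_nf
  · simp

lemma sigma_integrable (n : ℕ) :
    Integrable (fun t => Real.exp (-(t/2)) * rhoD (n + 1) t) volume := by
  rw [sigma_eq]
  exact (expcut_integrable (by positivity)).div_const _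

lemma sigma_integral (n : ℕ) :
    ∫ t, Real.exp (-(t/2)) * rhoD (n + 1) t
      = (2 * ((n : ℝ) + 1) / (2 * (n : ℝ) + 1)) * Real.exp (-(xN (n + 1) / 2)) := by
  rw [sigma_eq]
  rw [integral_div, expcut_integral (by positivity : (0:ℝ) < (n : ℝ) + 1/2)]
  have h1 : ((n : ℝ) + 1/2) * xN (n + 1) = ((n : ℝ) + 1) * xN (n+1) + (-(xN (n+1)/2)) := by ring
  rw [h1, Real.exp_add, exp_mul_xN]
  have h2 : (Nat.factorial (n+1) : ℝ) = ((n : ℝ) + 1) * Nat.factorial n := by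
    rw [Nat.factorial_succ]; push_cast; ring
  rw [h2]
  have hn : (Nat.factorial n : ℝ) ≠ 0 := by exact_mod_cast (Nat.factorial_pos n).ne'
  field_simp

noncomputable def PP (N : ℕ) : ℝ := ∏ n ∈ Finset.range N, (2 * ((n : ℝ) + 1) / (2 * n + 1))

lemma PP_nonneg (N : ℕ) : 0 ≤ PP N :=
  Finset.prod_nonneg fun n _ => by positivity

lemma PP_sq_le (N : ℕ) (hN : 1 ≤ N) : PP N ^ 2 ≤ 4 * N := by
  induction N with
  | zero => omega
  | succ n ih =>
    rcases Nat.eq_or_lt_of_le hN with h | h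
    · have : n = 0 := by omega
      subst this
      norm_num [PP]
    · have hn : 1 ≤ n := by omega
      have ih' := ih hn
      have hstep : PP (n + 1) = PP n * (2 * ((n : ℝ) + 1) / (2 * n + 1)) := by
        rw [PP, PP, Finset.prod_range_succ]
      rw [hstep, mul_pow]
      have hq : (0:ℝ) ≤ (2 * ((n : ℝ) + 1) / (2 * n + 1)) ^ 2 := by positivity
      have h1 : PP n ^ 2 * (2 * ((n : ℝ) + 1) / (2 * n + 1)) ^ 2
          ≤ 4 * n * (2 * ((n : ℝ) + 1) / (2 * n + 1)) ^ 2 :=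
        mul_le_mul_of_nonneg_right ih' hq
      refine h1.trans ?_
      rw [div_pow, mul_div_assoc', div_le_iff₀ (by positivity)]
      push_cast
      have hnr : (1:ℝ) ≤ (n:ℝ) := by exact_mod_cast hn
      nlinarith [hnr]

lemma PP_le (N : ℕ) (hN : 1 ≤ N) : PP N ≤ 2 * Real.sqrt N := by
  have h4 : (2 : ℝ) * Real.sqrt N = Real.sqrt (4 * N) := by
    rw [show (4 : ℝ) * N = 2^2 * N by ring, Real.sqrt_mul (by positivity),
      Real.sqrt_sq (by norm_num)]
  rw [h4]
  rw [show (PP N) = Real.sqrt (PP N ^ 2) by rw [Real.sqrt_sq (PP_nonneg N)]]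
  exact Real.sqrt_le_sqrt (PP_sq_le N hN)

end Aux

/-- Tail estimate for the convolution `ρ₁ * ⋯ * ρ_N`: there is `C > 0` such that for
every `N ≥ 1` and every `a ≤ ∑_{j=1}^N x(j)`,
`∫_{-∞}^a (ρ₁ * ⋯ * ρ_N)(t) dt ≤ C √N exp(-(1/2)(∑_{j=1}^N x(j) - a))`. -/
theorem stmt7 :
    ∃ C > (0 : ℝ), ∀ N : ℕ, 1 ≤ N → ∀ a : ℝ,
      a ≤ ∑ j ∈ Finset.Icc 1 N, xN j →
      ∫ t in Set.Iic a, convDList (List.ofFn fun j : Fin N => rhoD (j.1 + 1)) t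
        ≤ C * Real.sqrt N * Real.exp (-(1 / 2) * ((∑ j ∈ Finset.Icc 1 N, xN j) - a)) := by
  refine ⟨2, by norm_num, fun N hN a ha => ?_⟩
  set S : ℝ := ∑ j ∈ Finset.Icc 1 N, xN j with hS
  set w : ℝ → ℝ := fun t => Real.exp (-(t/2)) with hw
  have hwmul : ∀ s t : ℝ, w (s + t) = w s * w t := by
    intro s t
    simp only [hw, ← Real.exp_add]
    ring_nf
  -- destructure the list
  obtain ⟨g, l, hgl⟩ : ∃ g l, (List.ofFn fun j : Fin N => rhoD (j.1 + 1)) = g :: l := by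
    have : (List.ofFn fun j : Fin N => rhoD (j.1 + 1)) ≠ [] := by
      simp [List.ofFn_eq_nil_iff]
      omega
    exact List.exists_cons_of_ne_nil this
  have hmemρ : ∀ f ∈ g :: l, Integrable f volume ∧ ∀ t, 0 ≤ f t := by
    intro f hf
    rw [← hgl, List.mem_ofFn] at hf
    obtain ⟨j, rfl⟩ := hf
    exact ⟨rhoD_integrable j, rhoD_nonneg j⟩
  obtain ⟨hρI, hρ0, -⟩ := conv_list g l hmemρ
  -- weighted list
  have hmemσ : ∀ f ∈ (fun s => w s * g s) :: l.map (fun f => fun s => w s * f s),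
      Integrable f volume ∧ ∀ t, 0 ≤ f t := by
    intro f hf
    have hf' : f ∈ (g :: l).map (fun f => fun s => w s * f s) := by
      simpa using hf
    rw [← hgl, List.map_ofFn, List.mem_ofFn] at hf'
    obtain ⟨j, rfl⟩ := hf'
    refine ⟨sigma_integrable j, fun t => mul_nonneg (Real.exp_nonneg _) (rhoD_nonneg j t)⟩
  obtain ⟨hσI, hσ0, hσint⟩ := conv_list _ _ hmemσ
  have hσI' : Integrable (convDList ((g :: l).map (fun f => fun s => w s * f s))) volume := by
    simpa using hσI
  have hσ0' : ∀ t, 0 ≤ convDList ((g :: l).map (fun f => fun s => w s * f s)) t := by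
    simpa using hσ0
  have hweight : ∀ t, w t * convDList (g :: l) t
      = convDList ((g :: l).map (fun f => fun s => w s * f s)) t :=
    fun t => weight_conv w hwmul g l t
  -- step 1 : bound the set integral
  have step1 : ∫ t in Set.Iic a, convDList (g :: l) t
      ≤ ∫ t in Set.Iic a,
          Real.exp (a/2) * convDList ((g :: l).map (fun f => fun s => w s * f s)) t := by
    refine setIntegral_mono_on hρI.integrableOn
      ((hσI'.const_mul _).integrableOn) measurableSet_Iic ?_
    intro t ht
    rw [← hweight t, ← mul_assoc]
    refine le_mul_of_one_le_left (hρ0 t) ?_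
    rw [hw]
    simp only
    rw [← Real.exp_add]
    exact Real.one_le_exp (by simp at ht; linarith)
  have step2 : ∫ t in Set.Iic a,
        Real.exp (a/2) * convDList ((g :: l).map (fun f => fun s => w s * f s)) t
      ≤ Real.exp (a/2) * ∫ t, convDList ((g :: l).map (fun f => fun s => w s * f s)) t := by
    rw [integral_const_mul]
    refine mul_le_mul_of_nonneg_left ?_ (Real.exp_nonneg _)
    exact setIntegral_le_integral hσI' (Filter.Eventually.of_forall hσ0')
  -- compute the total integral of the weighted convolution
  have hcomp : ∫ t, convDList ((g :: l).map (fun f => fun s => w s * f s)) t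
      = PP N * Real.exp (-(S/2)) := by
    have hσint' : ∫ t, convDList ((g :: l).map (fun f => fun s => w s * f s)) t
        = (((g :: l).map (fun f => fun s => w s * f s)).map (fun f => ∫ t, f t)).prod := by
      simpa using hσint
    rw [hσint', ← hgl, List.map_ofFn, List.map_ofFn, List.prod_ofFn]
    have : ∀ j : Fin N, ((fun f => ∫ t, f t) ∘ (fun f => fun s => w s * f s) ∘
          fun j : Fin N => rhoD (j.1 + 1)) j
        = (2 * ((j.1 : ℝ) + 1) / (2 * (j.1 : ℝ) + 1)) * Real.exp (-(xN (j.1 + 1) / 2)) := by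
      intro j
      simp only [Function.comp_apply, hw]
      exact sigma_integral j.1
    rw [Finset.prod_congr rfl (fun j _ => this j)]
    rw [Finset.prod_mul_distrib, ← Real.exp_sum]
    have h1 : ∏ j : Fin N, (2 * ((j.1 : ℝ) + 1) / (2 * (j.1 : ℝ) + 1)) = PP N := by
      rw [PP, ← Fin.prod_univ_eq_prod_range]
    have h2 : ∑ j : Fin N, -(xN (j.1 + 1) / 2) = -(S/2) := by
      have hNN : N + 1 - 1 = N := by omega
      have hsum : (∑ j : Fin N, xN (j.1 + 1)) = S := by
        rw [hS, ← Finset.Ico_add_one_right_eq_Icc, Finset.sum_Ico_eq_sum_range, hNN,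
          ← Fin.sum_univ_eq_sum_range (fun i => xN (1 + i)) N]
        exact Finset.sum_congr rfl fun j _ => by rw [add_comm]
      rw [← hsum, ← neg_div, ← Finset.sum_neg_distrib, Finset.sum_div]
      exact Finset.sum_congr rfl fun j _ => (neg_div _ _).symm
    rw [h1, h2]
  -- final arithmetic
  rw [hgl] at *
  calc ∫ t in Set.Iic a, convDList (g :: l) t
      ≤ Real.exp (a/2) * (PP N * Real.exp (-(S/2))) := by
        rw [← hcomp]; exact step1.trans step2
    _ = PP N * Real.exp (-(1/2) * (S - a)) := by
        rw [← mul_assoc, mul_comm (Real.exp (a/2)) (PP N), mul_assoc, ← Real.exp_add]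
        ring_nf
    _ ≤ 2 * Real.sqrt N * Real.exp (-(1/2) * (S - a)) :=
        mul_le_mul_of_nonneg_right (PP_le N hN) (Real.exp_nonneg _)
end

section
/- Let U ⊆ ℝ² be open, let ε ∈ [0,1), and let φ : ℝ² → ℝ be a C² function such that |∇φ(x)| = 1 and |φ(x) · Δφ(x)| ≤ ε for all x ∈ U, and such that U ⊆ {x ∈ ℝ² : |φ(x)| < 1}. Then for every smooth compactly supported complex-valued function u with support contained in U, (1 − ε) ∫_{ℝ²} |u(x)|² dx ≤ 2 ( ∫_{ℝ²} |∇u(x)|² dx )^{1/2} ( ∫_{ℝ²} |u(x)|² dx )^{1/2}. -/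
open MeasureTheory

/-- The Laplacian of a real-valued function on `ℝ²`, as the sum of the second
derivatives in the directions of the standard orthonormal basis. -/
noncomputable def lap2 (φ : EuclideanSpace ℝ (Fin 2) → ℝ)
    (x : EuclideanSpace ℝ (Fin 2)) : ℝ :=
  ∑ i : Fin 2,
    fderiv ℝ (fun y => fderiv ℝ φ y (EuclideanSpace.basisFun (Fin 2) ℝ i)) x
      (EuclideanSpace.basisFun (Fin 2) ℝ i)

namespace Stmt16Aux

noncomputable abbrev V2 := EuclideanSpace ℝ (Fin 2)

noncomputable def ee (i : Fin 2) : V2 := EuclideanSpace.basisFun (Fin 2) ℝ i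

lemma lap2_eq (φ : V2 → ℝ) (x : V2) :
    lap2 φ x = ∑ i : Fin 2, fderiv ℝ (fun y => fderiv ℝ φ y (ee i)) x (ee i) := rfl

lemma norm_sq_V2 (y : V2) : ‖y‖ ^ 2 = ∑ i : Fin 2, (y i) ^ 2 := by
  rw [EuclideanSpace.norm_eq, Real.sq_sqrt (by positivity)]
  simp [sq_abs]

lemma inner_ee (y : V2) (i : Fin 2) : (inner ℝ y (ee i) : ℝ) = y i := by
  simp [ee, EuclideanSpace.basisFun_apply, EuclideanSpace.inner_single_right]

lemma grad_norm_sq (φ : V2 → ℝ) (x : V2) :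
    ‖gradient φ x‖ ^ 2 = ∑ i : Fin 2, (fderiv ℝ φ x (ee i)) ^ 2 := by
  rw [norm_sq_V2]
  refine Finset.sum_congr rfl fun i _ => ?_
  rw [← inner_ee (gradient φ x) i]
  rw [gradient, InnerProductSpace.toDual_symm_apply]

/-- Cauchy–Schwarz for integrals of continuous compactly supported nonneg functions. -/
lemma cs2 {f g : V2 → ℝ} (hfc : Continuous f) (hgc : Continuous g)
    (hf : HasCompactSupport f) (hg : HasCompactSupport g)
    (hf0 : ∀ x, 0 ≤ f x) (hg0 : ∀ x, 0 ≤ g x) :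
    ∫ x, f x * g x ≤ Real.sqrt (∫ x, f x ^ 2) * Real.sqrt (∫ x, g x ^ 2) := by
  have hpq : Real.HolderConjugate 2 2 := Real.HolderConjugate.two_two
  have h := integral_mul_le_Lp_mul_Lq_of_nonneg (μ := volume) hpq
    (Filter.Eventually.of_forall hf0) (Filter.Eventually.of_forall hg0)
    (hfc.memLp_of_hasCompactSupport hf) (hgc.memLp_of_hasCompactSupport hg)
  have e2 : ∀ y : ℝ, y ^ (2 : ℝ) = y ^ 2 := fun y => by
    rw [show (2:ℝ) = ((2:ℕ):ℝ) by norm_num, Real.rpow_natCast]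
  simp only [e2] at h
  rw [← Real.sqrt_eq_rpow, ← Real.sqrt_eq_rpow] at h
  exact h


lemma arith (c p0 p1 q0 q1 A B d0 e0 d1 e1 : ℝ)
    (hp : p0 ^ 2 + p1 ^ 2 = 1) (hc : |c| ≤ 1)
    (hq0 : q0 = 2 * A * d0 + 2 * B * e0) (hq1 : q1 = 2 * A * d1 + 2 * B * e1) :
    |c * (p0 * q0 + p1 * q1)|
      ≤ 2 * (Real.sqrt (A * A + B * B)
        * Real.sqrt ((d0 ^ 2 + e0 ^ 2) + (d1 ^ 2 + e1 ^ 2))) := by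
  have hW0 : (0:ℝ) ≤ A * A + B * B := by nlinarith [sq_nonneg A, sq_nonneg B]
  have hR0 : (0:ℝ) ≤ (d0 ^ 2 + e0 ^ 2) + (d1 ^ 2 + e1 ^ 2) := by positivity
  have hM0 : 0 ≤ 2 * (Real.sqrt (A * A + B * B)
      * Real.sqrt ((d0 ^ 2 + e0 ^ 2) + (d1 ^ 2 + e1 ^ 2))) := by positivity
  have hMsq : (2 * (Real.sqrt (A * A + B * B)
      * Real.sqrt ((d0 ^ 2 + e0 ^ 2) + (d1 ^ 2 + e1 ^ 2)))) ^ 2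
      = 4 * (A * A + B * B) * ((d0 ^ 2 + e0 ^ 2) + (d1 ^ 2 + e1 ^ 2)) := by
    rw [mul_pow, mul_pow, Real.sq_sqrt hW0, Real.sq_sqrt hR0]; ring
  have hcs1 : (p0 * q0 + p1 * q1) ^ 2 ≤ (p0 ^ 2 + p1 ^ 2) * (q0 ^ 2 + q1 ^ 2) := by
    nlinarith [sq_nonneg (p0 * q1 - p1 * q0)]
  have hq0sq : q0 ^ 2 ≤ 4 * (A * A + B * B) * (d0 ^ 2 + e0 ^ 2) := by
    rw [hq0]; nlinarith [sq_nonneg (A * e0 - B * d0)]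
  have hq1sq : q1 ^ 2 ≤ 4 * (A * A + B * B) * (d1 ^ 2 + e1 ^ 2) := by
    rw [hq1]; nlinarith [sq_nonneg (A * e1 - B * d1)]
  have hphi2 : c ^ 2 ≤ 1 := by
    have := abs_le.mp hc; nlinarith
  have hsq : (c * (p0 * q0 + p1 * q1)) ^ 2
      ≤ (2 * (Real.sqrt (A * A + B * B)
        * Real.sqrt ((d0 ^ 2 + e0 ^ 2) + (d1 ^ 2 + e1 ^ 2)))) ^ 2 := by
    rw [hMsq]
    calc (c * (p0 * q0 + p1 * q1)) ^ 2
        = c ^ 2 * (p0 * q0 + p1 * q1) ^ 2 := by ring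
      _ ≤ 1 * ((p0 ^ 2 + p1 ^ 2) * (q0 ^ 2 + q1 ^ 2)) :=
          mul_le_mul hphi2 hcs1 (sq_nonneg _) zero_le_one
      _ = q0 ^ 2 + q1 ^ 2 := by rw [hp]; ring
      _ ≤ 4 * (A * A + B * B) * ((d0 ^ 2 + e0 ^ 2) + (d1 ^ 2 + e1 ^ 2)) := by
          nlinarith [hq0sq, hq1sq]
  exact abs_le.mpr (abs_le_of_sq_le_sq' hsq hM0)

end Stmt16Aux

open Stmt16Aux in
/-- Poincaré-type inequality for a thin tubular domain `U ⊆ {|φ| < 1}` where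
`|∇φ| = 1` and `|φ Δφ| ≤ ε` on `U`: for every smooth compactly supported `u` with
support in `U`, `(1-ε) ∫ |u|² ≤ 2 (∫ |∇u|²)^(1/2) (∫ |u|²)^(1/2)`. -/
theorem stmt16 (U : Set (EuclideanSpace ℝ (Fin 2))) (hU : IsOpen U)
    (ε : ℝ) (hε : ε ∈ Set.Ico (0 : ℝ) 1)
    (φ : EuclideanSpace ℝ (Fin 2) → ℝ) (hφ : ContDiff ℝ 2 φ)
    (hgrad : ∀ x ∈ U, ‖gradient φ x‖ = 1)
    (hcurv : ∀ x ∈ U, |φ x * lap2 φ x| ≤ ε)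
    (hU1 : U ⊆ {x | |φ x| < 1})
    (u : EuclideanSpace ℝ (Fin 2) → ℂ) (hu : ContDiff ℝ (⊤ : ℕ∞) u)
    (hsupp : HasCompactSupport u) (hsub : tsupport u ⊆ U) :
    (1 - ε) * ∫ x, ‖u x‖ ^ 2
      ≤ 2 * Real.sqrt (∫ x, ∑ i : Fin 2,
            ‖fderiv ℝ u x (EuclideanSpace.basisFun (Fin 2) ℝ i)‖ ^ 2)
          * Real.sqrt (∫ x, ‖u x‖ ^ 2) := by
  classical
  -- real and imaginary parts
  set a : V2 → ℝ := fun x => Complex.reCLM (u x) with ha_def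
  set b : V2 → ℝ := fun x => Complex.imCLM (u x) with hb_def
  set w : V2 → ℝ := fun x => a x * a x + b x * b x with hw_def
  -- basic smoothness
  have hu1 : ContDiff ℝ 1 u := hu.of_le (by simp)
  have haC : ContDiff ℝ 1 a := Complex.reCLM.contDiff.comp hu1
  have hbC : ContDiff ℝ 1 b := Complex.imCLM.contDiff.comp hu1
  have hwC : ContDiff ℝ 1 w := (haC.mul haC).add (hbC.mul hbC)
  have h12 : (1 : WithTop ℕ∞) + 1 ≤ 2 := by norm_num
  have hφ1 : ContDiff ℝ 1 φ := hφ.of_le one_le_two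
  have hPc : ∀ i : Fin 2, ContDiff ℝ 1 (fun y => fderiv ℝ φ y (ee i)) :=
    fun i => (hφ.fderiv_right h12).clm_apply contDiff_const
  have hAc : ∀ i : Fin 2, ContDiff ℝ 1 (fun y => φ y * fderiv ℝ φ y (ee i)) :=
    fun i => hφ1.mul (hPc i)
  -- norms
  have weq : ∀ x, ‖u x‖ ^ 2 = w x := by
    intro x
    simp only [hw_def, ha_def, hb_def, Complex.reCLM_apply, Complex.imCLM_apply]
    rw [← Complex.normSq_apply, ← Complex.sq_norm]
  have w_nonneg : ∀ x, 0 ≤ w x := fun x => by rw [← weq]; positivity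
  -- support facts
  have hsw : Function.support w ⊆ Function.support u := by
    intro x hx
    simp only [Function.mem_support] at hx ⊢
    intro h0
    apply hx
    simp [hw_def, ha_def, hb_def, h0]
  have hw_supp : HasCompactSupport w := hsupp.mono hsw
  have hwts : tsupport w ⊆ tsupport u := closure_mono hsw
  -- derivative of w
  have hud : ∀ x, HasFDerivAt u (fderiv ℝ u x) x :=
    fun x => (hu.differentiable (by simp) x).hasFDerivAt
  have haD : ∀ x, HasFDerivAt a (Complex.reCLM.comp (fderiv ℝ u x)) x :=
    fun x => Complex.reCLM.hasFDerivAt.comp x (hud x)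
  have hbD : ∀ x, HasFDerivAt b (Complex.imCLM.comp (fderiv ℝ u x)) x :=
    fun x => Complex.imCLM.hasFDerivAt.comp x (hud x)
  have hwD : ∀ x, HasFDerivAt w
      ((a x • Complex.reCLM.comp (fderiv ℝ u x) + a x • Complex.reCLM.comp (fderiv ℝ u x))
        + (b x • Complex.imCLM.comp (fderiv ℝ u x) + b x • Complex.imCLM.comp (fderiv ℝ u x))) x :=
    fun x => ((haD x).mul (haD x)).add ((hbD x).mul (hbD x))
  have hq : ∀ i x, fderiv ℝ w x (ee i)
      = 2 * a x * (fderiv ℝ u x (ee i)).re + 2 * b x * (fderiv ℝ u x (ee i)).im := by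
    intro i x
    rw [(hwD x).fderiv]
    simp only [ContinuousLinearMap.add_apply, ContinuousLinearMap.smul_apply,
      ContinuousLinearMap.coe_comp', Function.comp_apply, Complex.reCLM_apply,
      Complex.imCLM_apply, smul_eq_mul]
    ring
  have hnd : ∀ i x, ‖fderiv ℝ u x (ee i)‖ ^ 2
      = (fderiv ℝ u x (ee i)).re ^ 2 + (fderiv ℝ u x (ee i)).im ^ 2 := by
    intro i x
    rw [Complex.sq_norm, Complex.normSq_apply]
    ring
  -- continuity facts
  have hcont_fu : Continuous (fderiv ℝ u) := hu.continuous_fderiv (by simp)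
  have hcont_fui : ∀ i, Continuous fun x => fderiv ℝ u x (ee i) :=
    fun i => hcont_fu.clm_apply continuous_const
  have hcont_fw : ∀ i : Fin 2, Continuous fun x => fderiv ℝ w x (ee i) :=
    fun i => (hwC.continuous_fderiv one_ne_zero).clm_apply continuous_const
  have hcont_fA : ∀ i : Fin 2,
      Continuous fun x => fderiv ℝ (fun y => φ y * fderiv ℝ φ y (ee i)) x (ee i) :=
    fun i => ((hAc i).continuous_fderiv one_ne_zero).clm_apply continuous_const
  -- compact support of derivative of w
  have hfw_cs : ∀ i : Fin 2, HasCompactSupport fun x => fderiv ℝ w x (ee i) := by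
    intro i
    exact (hw_supp.fderiv ℝ).comp_left (g := fun L : V2 →L[ℝ] ℝ => L (ee i)) rfl
  -- integrability
  have intDw : ∀ i : Fin 2, Integrable
      (fun x => fderiv ℝ (fun y => φ y * fderiv ℝ φ y (ee i)) x (ee i) * w x) volume :=
    fun i => (Continuous.integrable_of_hasCompactSupport
      ((hcont_fA i).mul hwC.continuous) (hw_supp.mul_left))
  have intAq : ∀ i : Fin 2, Integrable
      (fun x => (φ x * fderiv ℝ φ x (ee i)) * fderiv ℝ w x (ee i)) volume :=
    fun i => (Continuous.integrable_of_hasCompactSupport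
      ((hAc i).continuous.mul (hcont_fw i)) ((hfw_cs i).mul_left))
  have intAw : ∀ i : Fin 2, Integrable
      (fun x => (φ x * fderiv ℝ φ x (ee i)) * w x) volume :=
    fun i => (Continuous.integrable_of_hasCompactSupport
      ((hAc i).continuous.mul hwC.continuous) (hw_supp.mul_left))
  have intw : Integrable w volume :=
    Continuous.integrable_of_hasCompactSupport hwC.continuous hw_supp
  -- integration by parts
  have ibp : ∀ i : Fin 2, ∫ x, (φ x * fderiv ℝ φ x (ee i)) * fderiv ℝ w x (ee i)
      = - ∫ x, fderiv ℝ (fun y => φ y * fderiv ℝ φ y (ee i)) x (ee i) * w x := by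
    intro i
    exact integral_mul_fderiv_eq_neg_fderiv_mul_of_integrable
      (intDw i) (intAq i) (intAw i) (fun x _ => (hAc i).differentiable one_ne_zero x)
      (fun x _ => hwC.differentiable one_ne_zero x)
  -- divergence identity
  have hDsum : ∀ x, (∑ i : Fin 2, fderiv ℝ (fun y => φ y * fderiv ℝ φ y (ee i)) x (ee i))
      = (∑ i : Fin 2, (fderiv ℝ φ x (ee i)) ^ 2) + φ x * lap2 φ x := by
    intro x
    rw [lap2_eq, Finset.mul_sum, ← Finset.sum_add_distrib]
    refine Finset.sum_congr rfl fun i _ => ?_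
    rw [fderiv_fun_mul (hφ1.differentiable one_ne_zero x) ((hPc i).differentiable one_ne_zero x)]
    simp only [ContinuousLinearMap.add_apply, ContinuousLinearMap.smul_apply, smul_eq_mul]
    ring
  -- step 1
  have key1 : (1 - ε) * ∫ x, w x
      ≤ ∫ x, (∑ i : Fin 2, fderiv ℝ (fun y => φ y * fderiv ℝ φ y (ee i)) x (ee i)) * w x := by
    rw [← integral_const_mul]
    apply integral_mono (intw.const_mul _)
    · have hfe : (fun x : V2 => (∑ i : Fin 2,
          fderiv ℝ (fun y => φ y * fderiv ℝ φ y (ee i)) x (ee i)) * w x)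
          = fun x : V2 => ∑ i : Fin 2,
            fderiv ℝ (fun y => φ y * fderiv ℝ φ y (ee i)) x (ee i) * w x := by
        funext x; rw [Finset.sum_mul]
      rw [hfe]
      exact integrable_finset_sum _ fun i _ => intDw i
    · intro x
      show (1 - ε) * w x
        ≤ (∑ i : Fin 2, fderiv ℝ (fun y => φ y * fderiv ℝ φ y (ee i)) x (ee i)) * w x
      by_cases hx : x ∈ tsupport u
      · have hxU := hsub hx
        rw [hDsum x]
        have h1 : (∑ i : Fin 2, (fderiv ℝ φ x (ee i)) ^ 2) = 1 := by
          rw [← grad_norm_sq, hgrad x hxU]; norm_num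
        have h2 := abs_le.mp (hcurv x hxU)
        have : (1 - ε) ≤ (∑ i : Fin 2, (fderiv ℝ φ x (ee i)) ^ 2) + φ x * lap2 φ x := by
          rw [h1]; linarith [h2.1]
        exact mul_le_mul_of_nonneg_right this (w_nonneg x)
      · have hux : u x = 0 := image_eq_zero_of_notMem_tsupport hx
        have hwx : w x = 0 := by rw [← weq x, hux]; simp
        simp [hwx]
  -- step 2
  have key2 : ∫ x, (∑ i : Fin 2, fderiv ℝ (fun y => φ y * fderiv ℝ φ y (ee i)) x (ee i)) * w x
      = - ∫ x, ∑ i : Fin 2, (φ x * fderiv ℝ φ x (ee i)) * fderiv ℝ w x (ee i) := by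
    have l : ∫ x, (∑ i : Fin 2, fderiv ℝ (fun y => φ y * fderiv ℝ φ y (ee i)) x (ee i)) * w x
        = ∑ i : Fin 2, ∫ x, fderiv ℝ (fun y => φ y * fderiv ℝ φ y (ee i)) x (ee i) * w x := by
      simp_rw [Finset.sum_mul]
      exact integral_finset_sum _ fun i _ => intDw i
    have r : ∫ x, ∑ i : Fin 2, (φ x * fderiv ℝ φ x (ee i)) * fderiv ℝ w x (ee i)
        = ∑ i : Fin 2, ∫ x, (φ x * fderiv ℝ φ x (ee i)) * fderiv ℝ w x (ee i) :=
      integral_finset_sum _ fun i _ => intAq i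
    rw [l, r]
    have hterm : ∀ i : Fin 2,
        (∫ x, fderiv ℝ (fun y => φ y * fderiv ℝ φ y (ee i)) x (ee i) * w x)
        = -(∫ x, (φ x * fderiv ℝ φ x (ee i)) * fderiv ℝ w x (ee i)) := by
      intro i
      have := ibp i
      linarith
    rw [Finset.sum_congr rfl fun i _ => hterm i, Finset.sum_neg_distrib]
  -- gradient-type function for u
  set gg : V2 → ℝ := fun x => Real.sqrt (∑ i : Fin 2, ‖fderiv ℝ u x (ee i)‖ ^ 2) with hgg_def
  have hggc : Continuous gg := by
    apply Real.continuous_sqrt.comp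
    exact continuous_finset_sum _ fun i _ => ((hcont_fui i).norm.pow 2)
  have hgg0 : ∀ x, 0 ≤ gg x := fun x => Real.sqrt_nonneg _
  have hgg_cs : HasCompactSupport gg := by
    have : HasCompactSupport (fderiv ℝ u) := hsupp.fderiv ℝ
    refine this.comp_left (g := fun L : V2 →L[ℝ] ℂ => Real.sqrt (∑ i : Fin 2, ‖L (ee i)‖ ^ 2)) ?_
    simp
  -- step 3, pointwise bound
  have hpt : ∀ x, -(∑ i : Fin 2, (φ x * fderiv ℝ φ x (ee i)) * fderiv ℝ w x (ee i))
      ≤ 2 * (Real.sqrt (w x) * gg x) := by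
    intro x
    have habs : |∑ i : Fin 2, (φ x * fderiv ℝ φ x (ee i)) * fderiv ℝ w x (ee i)|
        ≤ 2 * (Real.sqrt (w x) * gg x) := by
      by_cases hx : x ∈ tsupport u
      · have hxU := hsub hx
        have hc : |φ x| ≤ 1 := le_of_lt (hU1 hxU)
        set p0 := fderiv ℝ φ x (ee 0) with hp0
        set p1 := fderiv ℝ φ x (ee 1) with hp1
        set q0 := fderiv ℝ w x (ee 0) with hq0'
        set q1 := fderiv ℝ w x (ee 1) with hq1'
        set d0 := (fderiv ℝ u x (ee 0)).re
        set e0 := (fderiv ℝ u x (ee 0)).im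
        set d1 := (fderiv ℝ u x (ee 1)).re
        set e1 := (fderiv ℝ u x (ee 1)).im
        have hp : p0 ^ 2 + p1 ^ 2 = 1 := by
          have := grad_norm_sq φ x
          rw [hgrad x hxU] at this
          simpa [Fin.sum_univ_two] using this.symm
        have hq0e : q0 = 2 * a x * d0 + 2 * b x * e0 := hq 0 x
        have hq1e : q1 = 2 * a x * d1 + 2 * b x * e1 := hq 1 x
        have hwx : w x = a x * a x + b x * b x := rfl
        have hggx : gg x = Real.sqrt ((d0 ^ 2 + e0 ^ 2) + (d1 ^ 2 + e1 ^ 2)) := by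
          rw [hgg_def]
          simp only [Fin.sum_univ_two, hnd]
          rfl
        have hW0 : (0:ℝ) ≤ a x * a x + b x * b x := by nlinarith [sq_nonneg (a x), sq_nonneg (b x)]
        have hR0 : (0:ℝ) ≤ (d0 ^ 2 + e0 ^ 2) + (d1 ^ 2 + e1 ^ 2) := by positivity
        have hS : (∑ i : Fin 2, (φ x * fderiv ℝ φ x (ee i)) * fderiv ℝ w x (ee i))
            = φ x * (p0 * q0 + p1 * q1) := by
          rw [Fin.sum_univ_two]; ring
        rw [hS, hwx, hggx]
        exact arith (φ x) p0 p1 q0 q1 (a x) (b x) d0 e0 d1 e1 hp hc hq0e hq1e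
      · have hfx : fderiv ℝ w x = 0 := by
          have : x ∉ tsupport w := fun h => hx (hwts h)
          exact Function.notMem_support.mp fun h => this (support_fderiv_subset ℝ h)
        simp only [hfx, ContinuousLinearMap.zero_apply, mul_zero, Finset.sum_const_zero, abs_zero]
        positivity
    calc -(∑ i : Fin 2, (φ x * fderiv ℝ φ x (ee i)) * fderiv ℝ w x (ee i))
        ≤ |∑ i : Fin 2, (φ x * fderiv ℝ φ x (ee i)) * fderiv ℝ w x (ee i)| := neg_le_abs _
      _ ≤ 2 * (Real.sqrt (w x) * gg x) := habs
  -- step 3, integral form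
  have hsqw_cs : HasCompactSupport fun x => Real.sqrt (w x) :=
    hw_supp.comp_left (g := Real.sqrt) Real.sqrt_zero
  have hsqw_c : Continuous fun x => Real.sqrt (w x) := Real.continuous_sqrt.comp hwC.continuous
  have intRHS : Integrable (fun x => 2 * (Real.sqrt (w x) * gg x)) volume :=
    (Continuous.integrable_of_hasCompactSupport (hsqw_c.mul hggc) hgg_cs.mul_left).const_mul 2
  have intS : Integrable
      (fun x => ∑ i : Fin 2, (φ x * fderiv ℝ φ x (ee i)) * fderiv ℝ w x (ee i)) volume :=
    integrable_finset_sum _ fun i _ => intAq i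
  have key3 : - ∫ x, ∑ i : Fin 2, (φ x * fderiv ℝ φ x (ee i)) * fderiv ℝ w x (ee i)
      ≤ ∫ x, 2 * (Real.sqrt (w x) * gg x) := by
    rw [← integral_neg]
    exact integral_mono intS.neg intRHS hpt
  -- step 4
  have key4 : ∫ x, 2 * (Real.sqrt (w x) * gg x)
      ≤ 2 * (Real.sqrt (∫ x, w x)
        * Real.sqrt (∫ x, ∑ i : Fin 2, ‖fderiv ℝ u x (ee i)‖ ^ 2)) := by
    rw [integral_const_mul]
    apply mul_le_mul_of_nonneg_left _ (by norm_num : (0:ℝ) ≤ 2)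
    have h := cs2 hsqw_c hggc hsqw_cs hgg_cs (fun x => Real.sqrt_nonneg _) hgg0
    have e1 : ∀ x, Real.sqrt (w x) ^ 2 = w x := fun x => Real.sq_sqrt (w_nonneg x)
    have e2 : ∀ x, gg x ^ 2 = ∑ i : Fin 2, ‖fderiv ℝ u x (ee i)‖ ^ 2 := fun x =>
      Real.sq_sqrt (by positivity)
    simp only [e1, e2] at h
    exact h
  -- conclusion
  have goal' : (1 - ε) * ∫ x, w x
      ≤ 2 * Real.sqrt (∫ x, ∑ i : Fin 2, ‖fderiv ℝ u x (ee i)‖ ^ 2)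
        * Real.sqrt (∫ x, w x) := by
    calc (1 - ε) * ∫ x, w x
        ≤ ∫ x, (∑ i : Fin 2, fderiv ℝ (fun y => φ y * fderiv ℝ φ y (ee i)) x (ee i)) * w x :=
          key1
      _ = - ∫ x, ∑ i : Fin 2, (φ x * fderiv ℝ φ x (ee i)) * fderiv ℝ w x (ee i) := key2
      _ ≤ ∫ x, 2 * (Real.sqrt (w x) * gg x) := key3
      _ ≤ 2 * (Real.sqrt (∫ x, w x)
            * Real.sqrt (∫ x, ∑ i : Fin 2, ‖fderiv ℝ u x (ee i)‖ ^ 2)) := key4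
      _ = 2 * Real.sqrt (∫ x, ∑ i : Fin 2, ‖fderiv ℝ u x (ee i)‖ ^ 2)
            * Real.sqrt (∫ x, w x) := by ring
  simp only [weq,
    show ∀ i : Fin 2, (EuclideanSpace.basisFun (Fin 2) ℝ i : V2) = ee i from fun _ => rfl]
  exact goal'
end
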